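/- arXiv:1605.06441 — 3 statements merged into one kernel-verified Lean document; each statement's English description precedes it below -/
import Mathlib

section
/- Let λ₁, ..., λₙ be distinct complex numbers, k a positive integer, and φ ∈ ℝ. Suppose Re(e^{-ikφ}λ_{s+1}) = Re(e^{-ikφ}λ_{s+2}) = ... = Re(e^{-ikφ}λ_{s+r}) and that for θ slightly less than φ, Re(e^{-ikθ}λ_{s+1}) < Re(e^{-ikθ}λ_{s+2}) < ... < Re(e^{-ikθ}λ_{s+r}). Then Im(e^{-ikφ}λ_{s+1}) > Im(e^{-ikφ}λ_{s+2}) > ... > Im(e^{-ikφ}λ_{s+r}), and for θ slightly greater than φ, the strict inequalities among Re(e^{-ikθ}λ_{s+j}) are completely reversed: Re(e^{-ikθ}λ_{s+1}) > ... > Re(e^{-ikθ}λ_{s+r}). -/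
open Complex

/-- The signed projection of `z` on the ray `e^{ikθ}ℝ⁺`. -/
noncomputable def pr (k : ℕ) (θ : ℝ) (z : ℂ) : ℝ :=
  (Complex.exp (-(k * θ : ℝ) * Complex.I) * z).re

lemma pr_shift (k : ℕ) (θ φ : ℝ) (z : ℂ) :
    pr k θ z = Real.cos (k * (θ - φ)) * (Complex.exp (-(k * φ : ℝ) * Complex.I) * z).re
             + Real.sin (k * (θ - φ)) * (Complex.exp (-(k * φ : ℝ) * Complex.I) * z).im := by
  simp only [pr, Complex.exp_mul_I, Complex.add_re, Complex.add_im, Complex.mul_re,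
    Complex.mul_im, Complex.I_re, Complex.I_im, Complex.cos_ofReal_re, Complex.cos_ofReal_im,
    Complex.sin_ofReal_re, Complex.sin_ofReal_im, Complex.cos_neg, Complex.sin_neg, Complex.neg_re, Complex.neg_im, Real.cos_neg, Real.sin_neg]
  have h : (k : ℝ) * θ = k * (θ - φ) + k * φ := by ring
  rw [h, Real.cos_add, Real.sin_add]
  ring

/-- If the eigenvalues `λ_{s+1}, …, λ_{s+r}` have equal signed projections at angle `φ` and
are strictly increasing for `θ` slightly less than `φ`, then their imaginary parts
`Im(e^{-ikφ}λ)` are strictly decreasing, and for `θ` slightly greater than `φ` the strict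
order of the projections is completely reversed. -/
theorem stmt11 (k : ℕ) (hk : 0 < k) (n : ℕ) (lam : Fin n → ℂ)
    (hinj : Function.Injective lam) (φ : ℝ) (s r : ℕ) (hsr : s + r ≤ n)
    (heq : ∀ i j : Fin n, s ≤ (i : ℕ) → (i : ℕ) < s + r → s ≤ (j : ℕ) → (j : ℕ) < s + r →
      pr k φ (lam i) = pr k φ (lam j))
    (hbefore : ∃ ε > 0, ∀ θ ∈ Set.Ioo (φ - ε) φ,
      ∀ i j : Fin n, s ≤ (i : ℕ) → i < j → (j : ℕ) < s + r →
        pr k θ (lam i) < pr k θ (lam j)) :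
    (∀ i j : Fin n, s ≤ (i : ℕ) → i < j → (j : ℕ) < s + r →
      (Complex.exp (-(k * φ : ℝ) * Complex.I) * lam j).im <
      (Complex.exp (-(k * φ : ℝ) * Complex.I) * lam i).im) ∧
    (∃ ε > 0, ∀ θ ∈ Set.Ioo φ (φ + ε),
      ∀ i j : Fin n, s ≤ (i : ℕ) → i < j → (j : ℕ) < s + r →
        pr k θ (lam j) < pr k θ (lam i)) := by
  obtain ⟨ε, hε, hb⟩ := hbefore
  have hkR : (0 : ℝ) < k := by exact_mod_cast hk
  have hπk : (0 : ℝ) < Real.pi / k := div_pos Real.pi_pos hkR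
  -- choose a test angle θ₀ slightly less than φ
  set d : ℝ := min ε (Real.pi / k) / 2 with hd
  have hd0 : 0 < d := by positivity
  have hdε : d < ε := by
    have : min ε (Real.pi / k) ≤ ε := min_le_left _ _
    simp only [hd]; linarith
  have hdπ : d < Real.pi / k := by
    have : min ε (Real.pi / k) ≤ Real.pi / k := min_le_right _ _
    simp only [hd]; linarith
  set θ₀ : ℝ := φ - d with hθ₀
  have hθ₀mem : θ₀ ∈ Set.Ioo (φ - ε) φ := ⟨by simp only [hθ₀, Set.mem_Ioo]; linarith, by simp only [hθ₀]; linarith⟩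
  have hsin0 : Real.sin (k * (θ₀ - φ)) < 0 := by
    have h1 : (k : ℝ) * (θ₀ - φ) = -(k * d) := by simp only [hθ₀]; ring
    rw [h1, Real.sin_neg, neg_neg_iff_pos]
    apply Real.sin_pos_of_pos_of_lt_pi
    · positivity
    · calc (k : ℝ) * d < k * (Real.pi / k) := by
            exact mul_lt_mul_of_pos_left hdπ hkR
        _ = Real.pi := by field_simp
  -- first conclusion
  have him : ∀ i j : Fin n, s ≤ (i : ℕ) → i < j → (j : ℕ) < s + r →
      (Complex.exp (-(k * φ : ℝ) * Complex.I) * lam j).im <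
      (Complex.exp (-(k * φ : ℝ) * Complex.I) * lam i).im := by
    intro i j hi hij hj
    have hi' : (i : ℕ) < s + r := lt_of_le_of_lt (Nat.le_of_lt_succ (Nat.lt_succ_of_lt hij)) hj
    have hj' : s ≤ (j : ℕ) := le_trans hi (le_of_lt hij)
    have hre : (Complex.exp (-(k * φ : ℝ) * Complex.I) * lam i).re =
        (Complex.exp (-(k * φ : ℝ) * Complex.I) * lam j).re :=
      heq i j hi hi' hj' hj
    have hlt := hb θ₀ hθ₀mem i j hi hij hj
    rw [pr_shift k θ₀ φ, pr_shift k θ₀ φ, hre] at hlt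
    have := lt_of_add_lt_add_left hlt
    nlinarith [this, hsin0]
  refine ⟨him, ⟨Real.pi / k, hπk, ?_⟩⟩
  intro θ hθ i j hi hij hj
  have hi' : (i : ℕ) < s + r := lt_of_le_of_lt (Nat.le_of_lt_succ (Nat.lt_succ_of_lt hij)) hj
  have hj' : s ≤ (j : ℕ) := le_trans hi (le_of_lt hij)
  have hre : (Complex.exp (-(k * φ : ℝ) * Complex.I) * lam i).re =
      (Complex.exp (-(k * φ : ℝ) * Complex.I) * lam j).re :=
    heq i j hi hi' hj' hj
  have hsin : 0 < Real.sin (k * (θ - φ)) := by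
    apply Real.sin_pos_of_pos_of_lt_pi
    · have := hθ.1; have : 0 < θ - φ := by linarith [hθ.1]
      positivity
    · have h2 : θ - φ < Real.pi / k := by linarith [hθ.2]
      calc (k : ℝ) * (θ - φ) < k * (Real.pi / k) := mul_lt_mul_of_pos_left h2 hkR
        _ = Real.pi := by field_simp
  have himij := him i j hi hij hj
  rw [pr_shift k θ φ, pr_shift k θ φ, hre]
  have : Real.sin (k * (θ - φ)) * (Complex.exp (-(k * φ : ℝ) * Complex.I) * lam j).im <
      Real.sin (k * (θ - φ)) * (Complex.exp (-(k * φ : ℝ) * Complex.I) * lam i).im := by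
    nlinarith [himij, hsin]
  linarith
end

section
/- If W and W̃ are two n×n invertible matrix-valued functions on a ray R near 0, whose columns w₁ ≺ ... ≺ wₙ and w̃₁ ≺ ... ≺ w̃ₙ are both strictly ordered by flatness on R, each column of W̃ being a linear combination (with constant coefficients) of columns of W and spanning the same solution space, and if additionally w̃_j ≍ w_j (same flatness class, i.e., w̃_j/w_j and w_j/w̃_j both bounded componentwise on R) for each j, then the constant matrix M with W̃ = W·M is upper triangular with nonzero diagonal. -/
open Filter Matrix

/-- If `W` and `W̃` are invertible matrix-valued functions on a ray near `0` whose columns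
are both strictly ordered by flatness, related by a constant invertible matrix `M`
(`W̃ = W·M`), and the `j`-th columns of `W̃` and `W` have the same flatness class
(quotients bounded both ways componentwise), then `M` is upper triangular with nonzero
diagonal. Here the ray is parametrized by `r → 0⁺`. -/
theorem stmt13 (n : ℕ) (W Wt : ℝ → Matrix (Fin n) (Fin n) ℂ)
    (M : Matrix (Fin n) (Fin n) ℂ) (hMinv : IsUnit M.det)
    (hWM : ∀ r, Wt r = W r * M)
    (hWinv : ∀ᶠ r in nhdsWithin (0 : ℝ) (Set.Ioi 0), IsUnit (W r).det)
    (hWnz : ∀ᶠ r in nhdsWithin (0 : ℝ) (Set.Ioi 0), ∀ i j : Fin n, W r i j ≠ 0)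
    (hWtnz : ∀ᶠ r in nhdsWithin (0 : ℝ) (Set.Ioi 0), ∀ i j : Fin n, Wt r i j ≠ 0)
    (hWord : ∀ j j' : Fin n, j < j' → ∀ i : Fin n,
      Tendsto (fun r => W r i j / W r i j') (nhdsWithin (0 : ℝ) (Set.Ioi 0)) (nhds 0))
    (hWtord : ∀ j j' : Fin n, j < j' → ∀ i : Fin n,
      Tendsto (fun r => Wt r i j / Wt r i j') (nhdsWithin (0 : ℝ) (Set.Ioi 0)) (nhds 0))
    (hsame : ∀ j : Fin n, ∃ c : ℝ, 0 < c ∧ ∀ᶠ r in nhdsWithin (0 : ℝ) (Set.Ioi 0),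
      ∀ i : Fin n, ‖Wt r i j / W r i j‖ ≤ c ∧ ‖W r i j / Wt r i j‖ ≤ c) :
    (∀ i j : Fin n, j < i → M i j = 0) ∧ (∀ j : Fin n, M j j ≠ 0) := by
  set L := nhdsWithin (0 : ℝ) (Set.Ioi 0) with hLdef
  haveI hL : L.NeBot := nhdsGT_neBot 0
  suffices hkey : ∀ j : Fin n, (∀ i, j < i → M i j = 0) ∧ M j j ≠ 0 by
    exact ⟨fun i j h => (hkey j).1 i h, fun j => (hkey j).2⟩
  intro j
  -- the column j of M is nonzero
  have hcol : ∃ k, M k j ≠ 0 := by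
    by_contra h
    push_neg at h
    have : M.det = 0 := Matrix.det_eq_zero_of_column_eq_zero j h
    rw [this] at hMinv
    exact not_isUnit_zero hMinv
  -- let k₀ be the largest index with M k₀ j ≠ 0
  obtain ⟨k, hk⟩ := hcol
  set S : Finset (Fin n) := Finset.univ.filter (fun k => M k j ≠ 0) with hSdef
  have hS : S.Nonempty := ⟨k, by simp [hSdef, hk]⟩
  set k₀ : Fin n := S.max' hS with hk₀def
  have hk₀ : M k₀ j ≠ 0 := by
    have := S.max'_mem hS
    simpa [hSdef] using this
  have hmax : ∀ i : Fin n, M i j ≠ 0 → i ≤ k₀ := by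
    intro i hi
    exact S.le_max' i (by simp [hSdef, hi])
  -- key limit: Wt r j j / W r j k₀ → M k₀ j
  have hsum : (fun r => Wt r j j / W r j k₀)
      =ᶠ[L] (fun r => ∑ m : Fin n, (W r j m / W r j k₀) * M m j) := by
    filter_upwards [] with r
    rw [hWM r, Matrix.mul_apply, Finset.sum_div]
    exact Finset.sum_congr rfl fun m _ => (div_mul_eq_mul_div _ _ _).symm
  have hlim : Tendsto (fun r => ∑ m : Fin n, (W r j m / W r j k₀) * M m j) L
      (nhds (∑ m : Fin n, if m = k₀ then M m j else 0)) := by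
    apply tendsto_finset_sum
    intro m _
    rcases lt_trichotomy m k₀ with h | h | h
    · rw [if_neg h.ne]
      simpa using (hWord m k₀ h j).mul_const (M m j)
    · rw [if_pos h, h]
      apply Tendsto.congr' _ tendsto_const_nhds
      filter_upwards [hWnz] with r hr
      rw [div_self (hr j k₀), one_mul]
    · have hz : M m j = 0 := by
        by_contra hmz
        exact absurd (hmax m hmz) (not_le.2 h)
      rw [if_neg h.ne', hz]
      simp only [mul_zero]
      exact tendsto_const_nhds
  have hT : Tendsto (fun r => Wt r j j / W r j k₀) L (nhds (M k₀ j)) := by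
    have : (∑ m : Fin n, if m = k₀ then M m j else 0) = M k₀ j := by
      simp [Finset.sum_ite_eq']
    rw [← this]
    exact hlim.congr' hsum.symm
  obtain ⟨c, hc, hev⟩ := hsame j
  -- k₀ ≤ j
  have hk0j : k₀ ≤ j := by
    by_contra h
    push_neg at h
    have h0 := hWord j k₀ h j
    have hbdd : IsBoundedUnder (· ≤ ·) L ((‖·‖) ∘ fun r => Wt r j j / W r j j) :=
      ⟨c, eventually_map.2 (hev.mono fun r hr => (hr j).1)⟩
    have hb : Tendsto (fun r => (W r j j / W r j k₀) * (Wt r j j / W r j j)) L (nhds 0) :=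
      h0.zero_mul_isBoundedUnder_le hbdd
    have heq : (fun r => (W r j j / W r j k₀) * (Wt r j j / W r j j))
        =ᶠ[L] (fun r => Wt r j j / W r j k₀) := by
      filter_upwards [hWnz] with r hr
      rw [div_mul_div_comm, mul_comm (W r j j) (Wt r j j),
        mul_div_mul_right _ _ (hr j j)]
    exact hk₀ (tendsto_nhds_unique hT (hb.congr' heq))
  -- j ≤ k₀
  have hjk : j ≤ k₀ := by
    by_contra h
    push_neg at h
    have h0 := hWord k₀ j h j
    have hbdd : IsBoundedUnder (· ≤ ·) L ((‖·‖) ∘ fun r => W r j j / Wt r j j) :=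
      ⟨c, eventually_map.2 (hev.mono fun r hr => (hr j).2)⟩
    have hb : Tendsto (fun r => (W r j k₀ / W r j j) * (W r j j / Wt r j j)) L (nhds 0) :=
      h0.zero_mul_isBoundedUnder_le hbdd
    have heq : (fun r => (W r j k₀ / W r j j) * (W r j j / Wt r j j))
        =ᶠ[L] (fun r => W r j k₀ / Wt r j j) := by
      filter_upwards [hWnz] with r hr
      rw [div_mul_div_comm, mul_comm (W r j k₀) (W r j j),
        mul_div_mul_left _ _ (hr j j)]
    have hinv : Tendsto (fun r => W r j k₀ / Wt r j j) L (nhds (M k₀ j)⁻¹) := by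
      have := hT.inv₀ hk₀
      apply this.congr
      intro r
      rw [inv_div]
    have : (M k₀ j)⁻¹ = 0 := tendsto_nhds_unique hinv (hb.congr' heq)
    exact hk₀ (inv_eq_zero.mp this)
  have hkj : k₀ = j := le_antisymm hk0j hjk
  constructor
  · intro i hji
    by_contra hi
    exact absurd (hmax i hi) (not_le.2 (hkj ▸ hji))
  · exact hkj ▸ hk₀
end

section
/- Let n = s₁ + r₂ + s₃, let C be an n×n upper triangular invertible matrix and C' an n×n lower triangular invertible matrix, written in 3×3 block form for this partition. Set P = diag(I_{s₁}, J_{r₂}, I_{s₃}), U = diag(I_{s₁}, C_{2,2}⁻¹, I_{s₃}), V = diag(I_{s₁}, C'_{2,2}, I_{s₃}). Then C̃ = P·U·C·V·P is upper triangular with diagonal blocks C̃_{1,1} = C_{1,1}, C̃_{2,2} = J_{r₂}·C'_{2,2}·J_{r₂}, C̃_{3,3} = C_{3,3}, and in particular det C̃ = det C_{1,1} · det C'_{2,2} · det C_{3,3}. -/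
open Matrix

/-- The r×r anti-diagonal matrix. -/
def Jmat (r : ℕ) : Matrix (Fin r) (Fin r) ℂ :=
  Matrix.of fun i j => if (i : ℕ) + (j : ℕ) + 1 = r then 1 else 0

/-!
`P`, `U` and `V` are the identity outside the middle block, so multiplying the block upper
triangular `C` by them keeps it block upper triangular and only changes the middle diagonal
block, to `J * C₂₂⁻¹ * C₂₂ * C'₂₂ * J = J * C'₂₂ * J`; here `C₂₂` is invertible because
`det C = det C₁₁ * det C₂₂ * det C₃₃`. Multiplying by `J` on both sides reverses rows and
columns, which turns the lower triangular `C'₂₂` into an upper triangular matrix with the same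
determinant.
-/

lemma Jmat_apply (r : ℕ) (i j : Fin r) :
    Jmat r i j = if j = Fin.rev i then 1 else 0 := by
  have := i.isLt
  simp only [Jmat, of_apply, Fin.ext_iff, Fin.val_rev]
  congr 1
  exact propext (by omega)

lemma Jmat_mul {r : ℕ} (A : Matrix (Fin r) (Fin r) ℂ) :
    Jmat r * A = A.submatrix Fin.rev id := by
  ext i j
  simp [mul_apply, Jmat_apply, ite_mul]

lemma mul_Jmat {r : ℕ} (A : Matrix (Fin r) (Fin r) ℂ) :
    A * Jmat r = A.submatrix id Fin.rev := by
  ext i j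
  simp [mul_apply, Jmat_apply, Fin.rev_eq_iff, eq_comm (a := j)]

lemma Jmat_mul_mul_Jmat {r : ℕ} (A : Matrix (Fin r) (Fin r) ℂ) :
    Jmat r * A * Jmat r = A.submatrix Fin.rev Fin.rev := by
  rw [mul_Jmat, Jmat_mul]
  rfl

lemma det_Jmat_mul_mul_Jmat {r : ℕ} (A : Matrix (Fin r) (Fin r) ℂ) :
    (Jmat r * A * Jmat r).det = A.det := by
  rw [Jmat_mul_mul_Jmat]
  exact det_submatrix_equiv_self Fin.revPerm A

section MiddleBlock

variable {l m n R : Type*} [Fintype l] [Fintype m] [Fintype n]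
  [DecidableEq l] [DecidableEq n] [CommRing R]

abbrev middleBlock (X : Matrix m m R) : Matrix (l ⊕ m ⊕ n) (l ⊕ m ⊕ n) R :=
  fromBlocks 1 0 0 (fromBlocks X 0 0 1)

lemma middleBlock_mul_middleBlock (X Y : Matrix m m R) :
    (middleBlock X * middleBlock Y : Matrix (l ⊕ m ⊕ n) _ R) = middleBlock (X * Y) := by
  simp [fromBlocks_multiply]

lemma middleBlock_mul_fromBlocks_mul_middleBlock (X Y D : Matrix m m R) (A : Matrix l l R)
    (B : Matrix l (m ⊕ n) R) (E : Matrix m n R) (F : Matrix n n R) :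
    middleBlock X * fromBlocks A B 0 (fromBlocks D E 0 F) * middleBlock Y =
      fromBlocks A (B * (fromBlocks Y 0 0 1 : Matrix (m ⊕ n) (m ⊕ n) R)) 0
        (fromBlocks (X * D * Y) (X * E) 0 F) := by
  simp [fromBlocks_multiply, Matrix.mul_assoc]

end MiddleBlock

lemma Matrix.eq_fromBlocks_of_blockUpperTriangular {l m n R : Type*} [Zero R]
    (M : Matrix (l ⊕ m ⊕ n) (l ⊕ m ⊕ n) R)
    (h21 : ∀ i j, M (Sum.inr (Sum.inl i)) (Sum.inl j) = 0)
    (h31 : ∀ i j, M (Sum.inr (Sum.inr i)) (Sum.inl j) = 0)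
    (h32 : ∀ i j, M (Sum.inr (Sum.inr i)) (Sum.inr (Sum.inl j)) = 0) :
    M = fromBlocks M.toBlocks₁₁ M.toBlocks₁₂ 0
      (fromBlocks M.toBlocks₂₂.toBlocks₁₁ M.toBlocks₂₂.toBlocks₁₂ 0 M.toBlocks₂₂.toBlocks₂₂) := by
  ext (i | i | i) (j | j | j) <;> simp [toBlocks₁₁, toBlocks₁₂, toBlocks₂₂, h21, h31, h32]

theorem stmt18_general (s₁ r₂ s₃ : ℕ)
    (C C' : Matrix (Fin s₁ ⊕ Fin r₂ ⊕ Fin s₃) (Fin s₁ ⊕ Fin r₂ ⊕ Fin s₃) ℂ)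
    (hCinv : IsUnit C.det)
    -- C is (blockwise) upper triangular:
    (hC21 : ∀ (i : Fin r₂) (j : Fin s₁), C (Sum.inr (Sum.inl i)) (Sum.inl j) = 0)
    (hC31 : ∀ (i : Fin s₃) (j : Fin s₁), C (Sum.inr (Sum.inr i)) (Sum.inl j) = 0)
    (hC32 : ∀ (i : Fin s₃) (j : Fin r₂), C (Sum.inr (Sum.inr i)) (Sum.inr (Sum.inl j)) = 0)
    (hC11 : ∀ i j : Fin s₁, j < i → C (Sum.inl i) (Sum.inl j) = 0)
    (hC33 : ∀ i j : Fin s₃, j < i → C (Sum.inr (Sum.inr i)) (Sum.inr (Sum.inr j)) = 0)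
    (hC'22 : ∀ i j : Fin r₂, i < j → C' (Sum.inr (Sum.inl i)) (Sum.inr (Sum.inl j)) = 0) :
    let C11 : Matrix (Fin s₁) (Fin s₁) ℂ := fun i j => C (Sum.inl i) (Sum.inl j)
    let C22 : Matrix (Fin r₂) (Fin r₂) ℂ := fun i j => C (Sum.inr (Sum.inl i)) (Sum.inr (Sum.inl j))
    let C33 : Matrix (Fin s₃) (Fin s₃) ℂ := fun i j => C (Sum.inr (Sum.inr i)) (Sum.inr (Sum.inr j))
    let C'22 : Matrix (Fin r₂) (Fin r₂) ℂ := fun i j => C' (Sum.inr (Sum.inl i)) (Sum.inr (Sum.inl j))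
    let U := fromBlocks (1 : Matrix (Fin s₁) (Fin s₁) ℂ) 0 0
        (fromBlocks C22⁻¹ 0 0 (1 : Matrix (Fin s₃) (Fin s₃) ℂ))
    let V := fromBlocks (1 : Matrix (Fin s₁) (Fin s₁) ℂ) 0 0
        (fromBlocks C'22 0 0 (1 : Matrix (Fin s₃) (Fin s₃) ℂ))
    let P := fromBlocks (1 : Matrix (Fin s₁) (Fin s₁) ℂ) 0 0
        (fromBlocks (Jmat r₂) 0 0 (1 : Matrix (Fin s₃) (Fin s₃) ℂ))
    let Ct := P * U * C * V * P
    -- C̃ is (blockwise) upper triangular: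
    (∀ (i : Fin r₂) (j : Fin s₁), Ct (Sum.inr (Sum.inl i)) (Sum.inl j) = 0) ∧
    (∀ (i : Fin s₃) (j : Fin s₁), Ct (Sum.inr (Sum.inr i)) (Sum.inl j) = 0) ∧
    (∀ (i : Fin s₃) (j : Fin r₂), Ct (Sum.inr (Sum.inr i)) (Sum.inr (Sum.inl j)) = 0) ∧
    (∀ i j : Fin s₁, j < i → Ct (Sum.inl i) (Sum.inl j) = 0) ∧
    (∀ i j : Fin r₂, j < i → Ct (Sum.inr (Sum.inl i)) (Sum.inr (Sum.inl j)) = 0) ∧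
    (∀ i j : Fin s₃, j < i → Ct (Sum.inr (Sum.inr i)) (Sum.inr (Sum.inr j)) = 0) ∧
    -- diagonal blocks:
    (∀ i j : Fin s₁, Ct (Sum.inl i) (Sum.inl j) = C11 i j) ∧
    (∀ i j : Fin r₂, Ct (Sum.inr (Sum.inl i)) (Sum.inr (Sum.inl j)) =
      (Jmat r₂ * C'22 * Jmat r₂) i j) ∧
    (∀ i j : Fin s₃, Ct (Sum.inr (Sum.inr i)) (Sum.inr (Sum.inr j)) = C33 i j) ∧
    Ct.det = C11.det * C'22.det * C33.det := by
  intro C11 C22 C33 C'22 U V P Ct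
  have hC : C = fromBlocks C11 C.toBlocks₁₂ 0 (fromBlocks C22 C.toBlocks₂₂.toBlocks₁₂ 0 C33) :=
    C.eq_fromBlocks_of_blockUpperTriangular hC21 hC31 hC32
  have hC22inv : IsUnit C22.det := by
    rw [hC, det_fromBlocks_zero₂₁, det_fromBlocks_zero₂₁] at hCinv
    exact (IsUnit.mul_iff.mp (IsUnit.mul_iff.mp hCinv).2).1
  obtain ⟨B, E, hCt⟩ : ∃ (B : Matrix (Fin s₁) (Fin r₂ ⊕ Fin s₃) ℂ)
      (E : Matrix (Fin r₂) (Fin s₃) ℂ),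
      Ct = fromBlocks C11 B 0 (fromBlocks (Jmat r₂ * C'22 * Jmat r₂) E 0 C33) := by
    have hPU : P * U = middleBlock (Jmat r₂ * C22⁻¹) := middleBlock_mul_middleBlock _ _
    have hVP : V * P = middleBlock (C'22 * Jmat r₂) := middleBlock_mul_middleBlock _ _
    apply Exists.intro; apply Exists.intro
    rw [show Ct = P * U * C * (V * P) by simp only [Ct, Matrix.mul_assoc], hPU, hVP, hC,
      middleBlock_mul_fromBlocks_mul_middleBlock, Matrix.mul_assoc (Jmat r₂) C22⁻¹ C22,
      nonsing_inv_mul _ hC22inv, Matrix.mul_one, ← Matrix.mul_assoc (Jmat r₂) C'22]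
  rw [hCt]
  refine ⟨fun _ _ => rfl, fun _ _ => rfl, fun _ _ => rfl, hC11, ?_, hC33,
    fun _ _ => rfl, fun _ _ => rfl, fun _ _ => rfl, ?_⟩
  · intro i j hji
    simpa [Jmat_mul_mul_Jmat] using hC'22 _ _ (Fin.rev_lt_rev.mpr hji)
  · rw [det_fromBlocks_zero₂₁, det_fromBlocks_zero₂₁, det_Jmat_mul_mul_Jmat, mul_assoc]

/-- Main theorem, case `m = 1`, structural form: for `n = s₁ + r₂ + s₃` and `C` upper
triangular invertible, `C'` lower triangular invertible (blockwise),
`C̃ = P·U·C·V·P` (with `P = diag(I, J, I)`, `U = diag(I, C₂₂⁻¹, I)`, `V = diag(I, C'₂₂, I)`)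
is upper triangular with diagonal blocks `C₁₁`, `J·C'₂₂·J`, `C₃₃`, and
`det C̃ = det C₁₁ · det C'₂₂ · det C₃₃`. -/
theorem stmt18 (s₁ r₂ s₃ : ℕ)
    (C C' : Matrix (Fin s₁ ⊕ Fin r₂ ⊕ Fin s₃) (Fin s₁ ⊕ Fin r₂ ⊕ Fin s₃) ℂ)
    (hCinv : IsUnit C.det) (hC'inv : IsUnit C'.det)
    -- C is (blockwise) upper triangular:
    (hC21 : ∀ (i : Fin r₂) (j : Fin s₁), C (Sum.inr (Sum.inl i)) (Sum.inl j) = 0)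
    (hC31 : ∀ (i : Fin s₃) (j : Fin s₁), C (Sum.inr (Sum.inr i)) (Sum.inl j) = 0)
    (hC32 : ∀ (i : Fin s₃) (j : Fin r₂), C (Sum.inr (Sum.inr i)) (Sum.inr (Sum.inl j)) = 0)
    (hC11 : ∀ i j : Fin s₁, j < i → C (Sum.inl i) (Sum.inl j) = 0)
    (hC22 : ∀ i j : Fin r₂, j < i → C (Sum.inr (Sum.inl i)) (Sum.inr (Sum.inl j)) = 0)
    (hC33 : ∀ i j : Fin s₃, j < i → C (Sum.inr (Sum.inr i)) (Sum.inr (Sum.inr j)) = 0)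
    -- C' is (blockwise) lower triangular:
    (hC'12 : ∀ (i : Fin s₁) (j : Fin r₂), C' (Sum.inl i) (Sum.inr (Sum.inl j)) = 0)
    (hC'13 : ∀ (i : Fin s₁) (j : Fin s₃), C' (Sum.inl i) (Sum.inr (Sum.inr j)) = 0)
    (hC'23 : ∀ (i : Fin r₂) (j : Fin s₃), C' (Sum.inr (Sum.inl i)) (Sum.inr (Sum.inr j)) = 0)
    (hC'11 : ∀ i j : Fin s₁, i < j → C' (Sum.inl i) (Sum.inl j) = 0)
    (hC'22 : ∀ i j : Fin r₂, i < j → C' (Sum.inr (Sum.inl i)) (Sum.inr (Sum.inl j)) = 0)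
    (hC'33 : ∀ i j : Fin s₃, i < j → C' (Sum.inr (Sum.inr i)) (Sum.inr (Sum.inr j)) = 0) :
    let C11 : Matrix (Fin s₁) (Fin s₁) ℂ := fun i j => C (Sum.inl i) (Sum.inl j)
    let C22 : Matrix (Fin r₂) (Fin r₂) ℂ := fun i j => C (Sum.inr (Sum.inl i)) (Sum.inr (Sum.inl j))
    let C33 : Matrix (Fin s₃) (Fin s₃) ℂ := fun i j => C (Sum.inr (Sum.inr i)) (Sum.inr (Sum.inr j))
    let C'22 : Matrix (Fin r₂) (Fin r₂) ℂ := fun i j => C' (Sum.inr (Sum.inl i)) (Sum.inr (Sum.inl j))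
    let U := fromBlocks (1 : Matrix (Fin s₁) (Fin s₁) ℂ) 0 0
        (fromBlocks C22⁻¹ 0 0 (1 : Matrix (Fin s₃) (Fin s₃) ℂ))
    let V := fromBlocks (1 : Matrix (Fin s₁) (Fin s₁) ℂ) 0 0
        (fromBlocks C'22 0 0 (1 : Matrix (Fin s₃) (Fin s₃) ℂ))
    let P := fromBlocks (1 : Matrix (Fin s₁) (Fin s₁) ℂ) 0 0
        (fromBlocks (Jmat r₂) 0 0 (1 : Matrix (Fin s₃) (Fin s₃) ℂ))
    let Ct := P * U * C * V * P
    -- C̃ is (blockwise) upper triangular: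
    (∀ (i : Fin r₂) (j : Fin s₁), Ct (Sum.inr (Sum.inl i)) (Sum.inl j) = 0) ∧
    (∀ (i : Fin s₃) (j : Fin s₁), Ct (Sum.inr (Sum.inr i)) (Sum.inl j) = 0) ∧
    (∀ (i : Fin s₃) (j : Fin r₂), Ct (Sum.inr (Sum.inr i)) (Sum.inr (Sum.inl j)) = 0) ∧
    (∀ i j : Fin s₁, j < i → Ct (Sum.inl i) (Sum.inl j) = 0) ∧
    (∀ i j : Fin r₂, j < i → Ct (Sum.inr (Sum.inl i)) (Sum.inr (Sum.inl j)) = 0) ∧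
    (∀ i j : Fin s₃, j < i → Ct (Sum.inr (Sum.inr i)) (Sum.inr (Sum.inr j)) = 0) ∧
    -- diagonal blocks:
    (∀ i j : Fin s₁, Ct (Sum.inl i) (Sum.inl j) = C11 i j) ∧
    (∀ i j : Fin r₂, Ct (Sum.inr (Sum.inl i)) (Sum.inr (Sum.inl j)) =
      (Jmat r₂ * C'22 * Jmat r₂) i j) ∧
    (∀ i j : Fin s₃, Ct (Sum.inr (Sum.inr i)) (Sum.inr (Sum.inr j)) = C33 i j) ∧
    Ct.det = C11.det * C'22.det * C33.det :=
  stmt18_general s₁ r₂ s₃ C C' hCinv hC21 hC31 hC32 hC11 hC33 hC'22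
end
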